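/- arXiv:1910.01675 — 8 statements merged into one kernel-verified Lean document; each statement's English description precedes it below -/
import Mathlib

section
/- Let $n \geq 2$ and let $a_1, \dots, a_n$ be elements of a commutative ring. Then the determinant of the $n \times n$ matrix whose diagonal entries are $a_1, \dots, a_n$ and whose off-diagonal entries are all $1$ equals $\prod_{i=1}^n a_i + \sum_{I \subseteq [n], \#I \leq n-2} (-1)^{n-\#I-1}(n-\#I-1) \prod_{i \in I} a_i$. -/
open Finset Matrix

private lemma aux_filter_card (n : ℕ) (hn : 2 ≤ n) :
    (Finset.univ.filter fun t : Finset (Fin n) => n - 1 ≤ t.card) =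
      insert Finset.univ (Finset.univ.image fun k : Fin n => Finset.univ.erase k) := by
  ext t
  simp only [mem_filter, mem_univ, true_and, mem_insert, mem_image]
  constructor
  · intro ht
    have hle : t.card ≤ n := by simpa using t.card_le_univ
    rcases eq_or_lt_of_le hle with h | h
    · left
      exact t.card_eq_iff_eq_univ.mp (by simpa using h)
    · right
      have hc : tᶜ.card = 1 := by
        have : tᶜ.card = n - t.card := by simp [Finset.card_compl]
        omega
      obtain ⟨k, hk⟩ := Finset.card_eq_one.mp hc
      exact ⟨k, by rw [← Finset.compl_singleton, ← hk, compl_compl]⟩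
  · rintro (rfl | ⟨k, rfl⟩)
    · simp
    · rw [Finset.card_erase_of_mem (mem_univ k)]
      simp
private lemma aux_det_updateRow_sum {R : Type*} [CommRing R] {n : Type*} [DecidableEq n]
    [Fintype n] (M : Matrix n n R) (k : n) {ι : Type*} (s : Finset ι) (v : ι → n → R) :
    (M.updateRow k (∑ j ∈ s, v j)).det = ∑ j ∈ s, (M.updateRow k (v j)).det := by
  classical
  induction s using Finset.induction_on with
  | empty =>
      rw [Finset.sum_empty, Finset.sum_empty]
      exact det_eq_zero_of_row_eq_zero k (by simp)
  | insert _ _ h ih =>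
      rw [Finset.sum_insert h, Finset.sum_insert h, det_updateRow_add, ih]

private lemma aux_det_diag_updateRow_ones {R : Type*} [CommRing R] {n : Type*} [DecidableEq n]
    [Fintype n] (b : n → R) (k : n) :
    ((Matrix.diagonal b).updateRow k (fun _ => (1 : R))).det = ∏ j ∈ univ.erase k, b j := by
  have h1 : (fun _ : n => (1 : R)) = ∑ j : n, Pi.single j (1 : R) := by
    ext j; rw [Finset.sum_apply]; simp [Pi.single_apply]
  rw [h1, aux_det_updateRow_sum, Finset.sum_eq_single k]
  · rw [diagonal_updateRow_single, det_diagonal,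
      Finset.prod_update_of_mem (mem_univ k), one_mul, Finset.sdiff_singleton_eq_erase]
  · intro j _ hjk
    refine det_eq_zero_of_column_eq_zero k (fun i => ?_)
    by_cases hik : i = k
    · subst hik
      rw [updateRow_self, Pi.single_eq_of_ne (Ne.symm hjk)]
    · rw [updateRow_ne hik, diagonal_apply_ne _ hik]
  · simp

private lemma aux_det_key {R : Type*} [CommRing R] (n : ℕ) (hn : 2 ≤ n) (b : Fin n → R) :
    Matrix.det (Matrix.of fun i j : Fin n => if i = j then b i + 1 else 1) =
      ∏ i, b i + ∑ k, ∏ j ∈ univ.erase k, b j := by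
  classical
  set m₁ : Fin n → Fin n → R := fun i => Pi.single i (b i) with hm₁
  set m₂ : Fin n → Fin n → R := fun _ _ => 1 with hm₂
  have hM : (Matrix.of fun i j : Fin n => if i = j then b i + 1 else 1) = Matrix.of (m₁ + m₂) := by
    ext i j
    by_cases h : i = j <;> simp [m₁, m₂, Pi.single_apply, h, eq_comm]
  rw [hM]
  have hdet : Matrix.det (Matrix.of (m₁ + m₂)) =
      ∑ s : Finset (Fin n), Matrix.det (Matrix.of (s.piecewise m₁ m₂)) :=
    (Matrix.detRowAlternating.toMultilinearMap.map_add_univ m₁ m₂ : _)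
  rw [hdet]
  have hzero : ∀ s : Finset (Fin n), ¬ (n - 1 ≤ s.card) →
      Matrix.det (Matrix.of (s.piecewise m₁ m₂)) = 0 := by
    intro s hs
    have hcompl : 1 < sᶜ.card := by
      have h1 : sᶜ.card = n - s.card := by simp [Finset.card_compl]
      have h2 : s.card ≤ n := by simpa using s.card_le_univ
      omega
    obtain ⟨i, hi, j, hj, hij⟩ := Finset.one_lt_card.mp hcompl
    rw [Finset.mem_compl] at hi hj
    refine det_zero_of_row_eq hij ?_
    show s.piecewise m₁ m₂ i = s.piecewise m₁ m₂ j
    rw [Finset.piecewise_eq_of_notMem _ _ _ hi, Finset.piecewise_eq_of_notMem _ _ _ hj]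
  rw [← Finset.sum_filter_of_ne (p := fun s : Finset (Fin n) => n - 1 ≤ s.card) (hp := fun s _ h => by
        by_contra hc; exact h (hzero s hc)),
    aux_filter_card n hn, Finset.sum_insert, Finset.sum_image]
  · congr 1
    · have : Matrix.of (Finset.univ.piecewise m₁ m₂) = Matrix.diagonal b := by
        ext i j
        rw [Matrix.of_apply, Finset.piecewise_univ]
        simp [m₁, Pi.single_apply, Matrix.diagonal, eq_comm]
      rw [this, det_diagonal]
    · refine Finset.sum_congr rfl fun k _ => ?_
      have : Matrix.of ((Finset.univ.erase k).piecewise m₁ m₂) =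
          (Matrix.diagonal b).updateRow k (fun _ => (1 : R)) := by
        ext i j
        by_cases hik : i = k
        · subst hik
          rw [Matrix.of_apply, Finset.piecewise_eq_of_notMem _ _ _ (Finset.notMem_erase i _),
            updateRow_self]
        · rw [Matrix.of_apply,
            Finset.piecewise_eq_of_mem _ _ _ (Finset.mem_erase.mpr ⟨hik, mem_univ i⟩),
            updateRow_ne hik]
          simp [m₁, Pi.single_apply, Matrix.diagonal, eq_comm]
      rw [this, aux_det_diag_updateRow_ones]
  · intro k _ l _ h
    by_contra hkl
    exact (Finset.notMem_erase k Finset.univ) ((show Finset.univ.erase k = Finset.univ.erase l from h) ▸ Finset.mem_erase.mpr ⟨hkl, mem_univ k⟩)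
  · simp only [Finset.mem_image, not_exists]
    rintro k ⟨-, hk⟩
    have h1 := congrArg Finset.card hk
    rw [Finset.card_erase_of_mem (mem_univ k), Finset.card_univ, Fintype.card_fin] at h1
    omega

private lemma aux_alg {R : Type*} [CommRing R] (n : ℕ) (hn : 2 ≤ n) (a : Fin n → R) :
    (∏ i, (a i - 1)) + ∑ k, ∏ j ∈ univ.erase k, (a j - 1) =
      ∏ i, a i +
        ∑ I ∈ Finset.univ.powerset.filter (fun I : Finset (Fin n) => I.card ≤ n - 2),
          (-1 : R) ^ (n - I.card - 1) * ((n - I.card - 1 : ℕ) : R) * ∏ i ∈ I, a i := by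
  classical
  have expand : ∀ s : Finset (Fin n), (∏ i ∈ s, (a i - 1)) =
      ∑ t ∈ s.powerset, (∏ i ∈ t, a i) * (-1 : R) ^ (s.card - t.card) := by
    intro s
    have h0 : (∏ i ∈ s, (a i - 1)) = ∏ i ∈ s, (a i + (-1)) := by
      refine Finset.prod_congr rfl fun i _ => by ring
    rw [h0, Finset.prod_add]
    refine Finset.sum_congr rfl fun t ht => ?_
    rw [Finset.prod_const, Finset.card_sdiff_of_subset (Finset.mem_powerset.mp ht)]
  have card_erase : ∀ k : Fin n, (Finset.univ.erase k).card = n - 1 := fun k => by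
    rw [Finset.card_erase_of_mem (mem_univ k), Finset.card_univ, Fintype.card_fin]
  have step2 : (∑ k, ∏ j ∈ univ.erase k, (a j - 1)) =
      ∑ t ∈ (Finset.univ : Finset (Fin n)).powerset,
        ((n - t.card : ℕ) : R) * ((∏ i ∈ t, a i) * (-1 : R) ^ (n - 1 - t.card)) := by
    calc (∑ k, ∏ j ∈ univ.erase k, (a j - 1))
        = ∑ k : Fin n, ∑ t ∈ (Finset.univ.erase k).powerset,
            (∏ i ∈ t, a i) * (-1 : R) ^ (n - 1 - t.card) := by
          refine Finset.sum_congr rfl fun k _ => ?_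
          rw [expand]
          refine Finset.sum_congr rfl fun t _ => by rw [card_erase]
      _ = ∑ k : Fin n, ∑ t ∈ (Finset.univ : Finset (Fin n)).powerset,
            if k ∉ t then (∏ i ∈ t, a i) * (-1 : R) ^ (n - 1 - t.card) else 0 := by
          refine Finset.sum_congr rfl fun k _ => ?_
          rw [← Finset.sum_filter]
          congr 1
          ext t
          simp [Finset.mem_powerset, Finset.subset_erase]
      _ = ∑ t ∈ (Finset.univ : Finset (Fin n)).powerset,
            ((n - t.card : ℕ) : R) * ((∏ i ∈ t, a i) * (-1 : R) ^ (n - 1 - t.card)) := by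
          rw [Finset.sum_comm]
          refine Finset.sum_congr rfl fun t _ => ?_
          rw [Finset.sum_ite, Finset.sum_const_zero, add_zero, Finset.sum_const,
            nsmul_eq_mul]
          congr 2
          have h : Finset.univ.filter (fun k : Fin n => k ∉ t) = tᶜ := by
            ext k; simp [Finset.mem_compl]
          rw [h, Finset.card_compl, Fintype.card_fin]
  have step1 : (∏ i, (a i - 1)) =
      ∑ t ∈ (Finset.univ : Finset (Fin n)).powerset,
        (∏ i ∈ t, a i) * (-1 : R) ^ (n - t.card) := by
    rw [expand]
    refine Finset.sum_congr rfl fun t _ => by rw [Finset.card_univ, Fintype.card_fin]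
  rw [step1, step2, ← Finset.sum_add_distrib,
    ← Finset.sum_filter_add_sum_filter_not (Finset.univ : Finset (Fin n)).powerset
      (fun t => t.card ≤ n - 2)]
  have hnot : (Finset.univ : Finset (Fin n)).powerset.filter (fun t => ¬ t.card ≤ n - 2) =
      insert Finset.univ (Finset.univ.image fun k : Fin n => Finset.univ.erase k) := by
    rw [Finset.powerset_univ, ← aux_filter_card n hn]
    refine Finset.filter_congr fun t _ => ?_
    constructor <;> intro h <;> omega
  have h2 : (∑ t ∈ (Finset.univ : Finset (Fin n)).powerset.filter (fun t => ¬ t.card ≤ n - 2),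
      ((∏ i ∈ t, a i) * (-1 : R) ^ (n - t.card) +
        ((n - t.card : ℕ) : R) * ((∏ i ∈ t, a i) * (-1 : R) ^ (n - 1 - t.card)))) = ∏ i, a i := by
    rw [hnot, Finset.sum_insert, Finset.sum_image]
    · rw [Finset.sum_eq_zero, add_zero, Finset.card_univ, Fintype.card_fin]
      · simp
      · intro k _
        rw [card_erase]
        have e1 : n - (n - 1) = 1 := by omega
        have e2 : n - 1 - (n - 1) = 0 := by omega
        rw [e1, e2]
        push_cast
        ring
    · intro k _ l _ h
      by_contra hkl
      exact (Finset.notMem_erase k Finset.univ) ((show Finset.univ.erase k = Finset.univ.erase l from h) ▸ Finset.mem_erase.mpr ⟨hkl, mem_univ k⟩)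
    · simp only [Finset.mem_image, not_exists]
      rintro k ⟨-, hk⟩
      have h1 := congrArg Finset.card hk
      rw [Finset.card_erase_of_mem (mem_univ k), Finset.card_univ, Fintype.card_fin] at h1
      omega
  have h1 : (∑ t ∈ (Finset.univ : Finset (Fin n)).powerset.filter (fun t => t.card ≤ n - 2),
      ((∏ i ∈ t, a i) * (-1 : R) ^ (n - t.card) +
        ((n - t.card : ℕ) : R) * ((∏ i ∈ t, a i) * (-1 : R) ^ (n - 1 - t.card)))) =
      ∑ I ∈ Finset.univ.powerset.filter (fun I : Finset (Fin n) => I.card ≤ n - 2),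
        (-1 : R) ^ (n - I.card - 1) * ((n - I.card - 1 : ℕ) : R) * ∏ i ∈ I, a i := by
    refine Finset.sum_congr rfl fun t ht => ?_
    rw [Finset.mem_filter] at ht
    have hc : t.card ≤ n - 2 := ht.2
    obtain ⟨m, hm⟩ : ∃ m, n - t.card = m + 2 := ⟨n - t.card - 2, by omega⟩
    have e2 : n - 1 - t.card = m + 1 := by omega
    have e3 : m + 2 - 1 = m + 1 := by omega
    rw [hm, e2, e3]
    push_cast
    ring
  rw [h1, h2, add_comm]

theorem stmt_0 {R : Type*} [CommRing R] (n : ℕ) (hn : 2 ≤ n) (a : Fin n → R) :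
    Matrix.det (Matrix.of fun i j : Fin n => if i = j then a i else 1) =
      ∏ i, a i +
        ∑ I ∈ Finset.univ.powerset.filter (fun I : Finset (Fin n) => I.card ≤ n - 2),
          (-1 : R) ^ (n - I.card - 1) * ((n - I.card - 1 : ℕ) : R) * ∏ i ∈ I, a i := by
  have h := aux_det_key n hn (fun i => a i - 1)
  simp only [sub_add_cancel] at h
  rw [h, aux_alg n hn a]
end

section
/- For $n \geq 1$, the sum of the signs of all derangements of $\{1, \dots, n\}$ equals $(-1)^{n-1}(n-1)$. -/
open Matrix Finset Equiv

theorem stmt_1 (n : ℕ) (hn : 1 ≤ n) :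
    ∑ σ ∈ Finset.univ.filter (fun σ : Equiv.Perm (Fin n) => ∀ i, σ i ≠ i),
        (Equiv.Perm.sign σ : ℤ) = (-1) ^ (n - 1) * (n - 1 : ℕ) := by
  set M : Matrix (Fin n) (Fin n) ℤ := fun i j => if i = j then 0 else 1 with hM
  have h1 : M.det = ∑ σ ∈ Finset.univ.filter (fun σ : Equiv.Perm (Fin n) => ∀ i, σ i ≠ i),
      (Equiv.Perm.sign σ : ℤ) := by
    rw [Matrix.det_apply, ← Finset.sum_filter_add_sum_filter_not Finset.univ
      (fun σ : Equiv.Perm (Fin n) => ∀ i, σ i ≠ i)]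
    have hz : ∑ σ ∈ Finset.univ.filter
        (fun σ : Equiv.Perm (Fin n) => ¬ ∀ i, σ i ≠ i), Equiv.Perm.sign σ • ∏ i, M (σ i) i = 0 := by
      apply Finset.sum_eq_zero
      intro σ hσ
      simp only [Finset.mem_filter, not_forall, not_not] at hσ
      obtain ⟨i, hi⟩ := hσ.2
      have : ∏ j, M (σ j) j = 0 := Finset.prod_eq_zero (Finset.mem_univ i) (by simp [hM, hi])
      simp [this]
    rw [hz, add_zero]
    apply Finset.sum_congr rfl
    intro σ hσ
    simp only [Finset.mem_filter] at hσ
    have : ∏ j, M (σ j) j = 1 := Finset.prod_eq_one (fun j _ => by simp [hM, hσ.2 j])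
    rw [this]; simp [Units.smul_def]
  have h2 : M = -(1 + Matrix.replicateCol Unit (fun _ => (1:ℤ)) * Matrix.replicateRow Unit (fun _ => (-1:ℤ))) := by
    ext i j
    by_cases h : i = j <;>
      simp [hM, h, Matrix.mul_apply, Matrix.one_apply, Matrix.replicateCol, Matrix.replicateRow]
  have h3 : M.det = (-1)^n * (1 - n : ℤ) := by
    rw [h2, Matrix.det_neg, Matrix.det_one_add_replicateCol_mul_replicateRow]
    simp [dotProduct, mul_comm]
    ring
  rw [← h1, h3]
  obtain ⟨m, rfl⟩ := Nat.exists_eq_add_of_le hn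
  push_cast [Nat.add_sub_cancel_left]
  ring
end

section
/- Let $\mathsf{A} = (a_{ij})$ be a $2\times 2$ matrix and $\mathsf{B} = (b_{ij})$ a $3\times 3$ matrix over a commutative ring, and let $q$ be a ring element. Define the $5\times 5$ matrix $M$ whose upper-left $2\times 2$ block is $\mathsf{A}$, lower-right $3\times 3$ block is $\mathsf{B}$, with entry $M_{i,2+j} = q\,a_{i1} b_{1j}$ for $i \in \{1,2\}$, $j \in \{1,2,3\}$, and entry $M_{2+j,i} = q\, a_{1i} b_{j1}$ for $i \in \{1,2\}$, $j \in \{1,2,3\}$. Then $\det M = (1 - q^2 a_{11} b_{11})\, \det \mathsf{A} \, \det \mathsf{B}$. -/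
set_option maxHeartbeats 2000000 in
theorem stmt_4 {R : Type*} [CommRing R] (q : R)
    (A : Matrix (Fin 2) (Fin 2) R) (B : Matrix (Fin 3) (Fin 3) R) :
    Matrix.det (Matrix.of fun i j : Fin 2 ⊕ Fin 3 =>
        match i, j with
        | Sum.inl i, Sum.inl j => A i j
        | Sum.inl i, Sum.inr j => q * A i 0 * B 0 j
        | Sum.inr i, Sum.inl j => q * A 0 j * B i 0
        | Sum.inr i, Sum.inr j => B i j) =
      (1 - q ^ 2 * A 0 0 * B 0 0) * A.det * B.det := by
  have h : (Matrix.of fun i j : Fin 2 ⊕ Fin 3 =>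
        match i, j with
        | Sum.inl i, Sum.inl j => A i j
        | Sum.inl i, Sum.inr j => q * A i 0 * B 0 j
        | Sum.inr i, Sum.inl j => q * A 0 j * B i 0
        | Sum.inr i, Sum.inr j => B i j) =
      Matrix.reindex finSumFinEquiv.symm finSumFinEquiv.symm
        !![A 0 0, A 0 1, q * A 0 0 * B 0 0, q * A 0 0 * B 0 1, q * A 0 0 * B 0 2;
           A 1 0, A 1 1, q * A 1 0 * B 0 0, q * A 1 0 * B 0 1, q * A 1 0 * B 0 2;
           q * A 0 0 * B 0 0, q * A 0 1 * B 0 0, B 0 0, B 0 1, B 0 2;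
           q * A 0 0 * B 1 0, q * A 0 1 * B 1 0, B 1 0, B 1 1, B 1 2;
           q * A 0 0 * B 2 0, q * A 0 1 * B 2 0, B 2 0, B 2 1, B 2 2] := by
    ext i j
    rcases i with i | i <;> rcases j with j | j <;> fin_cases i <;> fin_cases j <;> rfl
  have e1 : Fin.castSucc (2 : Fin 4) = (2 : Fin 5) := by decide
  have e2 : Fin.castSucc (Fin.succ (2 : Fin 3)) = (3 : Fin 5) := by decide
  have e3 : Fin.castSucc ((3:Fin 4)) = (3 : Fin 5) := by decide
  rw [h, Matrix.det_reindex_self]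
  simp [Matrix.det_succ_row_zero, Fin.sum_univ_succ, Matrix.det_fin_two, Matrix.det_fin_three, Fin.succAbove, e1, e2, e3]
  ring
end

section
/- Let $\mathsf{A}_1, \dots, \mathsf{A}_r$ be square matrices over a commutative ring, where $\mathsf{A}_k$ is indexed by a finite set $I_k$ with a distinguished element $i_1^k \in I_k$, and write $\mathsf{A}_k = (a_{i,j})_{i,j \in I_k}$. Let $q$ be a ring element, and define the square matrix $M$ indexed by the disjoint union $I = \bigsqcup_k I_k$ by $m_{i,j} = a_{i,j}$ if $i,j \in I_k$ for the same $k$, and $m_{i,j} = q \cdot a_{i, i_1^h} \cdot a_{i_1^k, j}$ if $i \in I_h$, $j \in I_k$ with $h \neq k$. Then $\det M = \Big(1 + \sum_{K \subseteq [r], \#K \geq 2} (-1)^{\#K - 1}(\#K - 1) \prod_{k \in K} q\, a_{i_1^k, i_1^k}\Big) \prod_{k=1}^r \det \mathsf{A}_k$. -/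
open Finset Matrix

section aux

variable {R : Type*} [CommRing R] {n : Type*} [Fintype n] [DecidableEq n]

private lemma det_one_updateRow (k : n) (v : n → R) :
    (Matrix.updateRow (1 : Matrix n n R) k v).det = v k := by
  have h : v = ∑ j, v j • (1 : Matrix n n R) j := by
    funext i
    simp [Matrix.one_apply, Pi.single_apply]
  calc (Matrix.updateRow (1 : Matrix n n R) k v).det
      = (Matrix.updateRow (1 : Matrix n n R) k (∑ j, v j • (1 : Matrix n n R) j)).det := by
        rw [← h]
    _ = v k • (1 : Matrix n n R).det := Matrix.det_updateRow_sum _ k v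
    _ = v k := by simp

private lemma det_colConst (x : n → R) :
    (Matrix.of fun h k : n => if h = k then 1 else x k).det
      = ∏ i, (1 - x i) + ∑ k, (∏ i ∈ univ.erase k, (1 - x i)) * x k := by
  classical
  set f := (Matrix.detRowAlternating : (n → R) [⋀^n]→ₗ[R] R) with hf
  set a : n → n → R := fun h => (1 - x h) • (Pi.single h 1 : n → R) with ha
  set b : n → n → R := fun _ => x with hb
  have hB : (Matrix.of fun h k : n => if h = k then 1 else x k) = a + b := by
    funext h k
    by_cases hhk : h = k <;>
      simp [ha, hb, Matrix.of_apply, hhk, Pi.single_apply, eq_comm] <;> ring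
  have hdet : (Matrix.of fun h k : n => if h = k then 1 else x k).det
      = f.toMultilinearMap (a + b) := by rw [← hB]; rfl
  rw [hdet, MultilinearMap.map_add_univ]
  set base : Finset n → (n → n → R) :=
      fun s => s.piecewise (fun i => Pi.single i 1) b with hbase
  have key : ∀ s : Finset n,
      f.toMultilinearMap (s.piecewise a b)
        = (∏ i ∈ s, (1 - x i)) * f.toMultilinearMap (base s) := by
    intro s
    have h1 : s.piecewise a b
        = s.piecewise (fun i => (1 - x i) • (base s) i) (base s) := by
      funext i
      by_cases hi : i ∈ s <;>
        simp [ha, hb, hbase, Finset.piecewise_eq_of_mem, Finset.piecewise_eq_of_notMem, hi]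
    rw [h1, MultilinearMap.map_piecewise_smul, smul_eq_mul]
  have hval_univ : f.toMultilinearMap (base univ) = 1 := by
    have h2 : base univ = (1 : Matrix n n R) := by
      funext i j
      simp [hbase, Finset.piecewise_univ, Matrix.one_apply, Pi.single_apply, eq_comm]
    rw [h2]
    exact Matrix.det_one
  have hval_erase : ∀ k : n, f.toMultilinearMap (base (univ.erase k)) = x k := by
    intro k
    have h2 : base (univ.erase k) = Matrix.updateRow (1 : Matrix n n R) k x := by
      funext i j
      by_cases hik : i = k
      · subst hik
        simp [hbase, hb, Finset.piecewise_eq_of_notMem, Matrix.updateRow_self]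
      · have hi : i ∈ univ.erase k := Finset.mem_erase.mpr ⟨hik, Finset.mem_univ i⟩
        simp [hbase, Finset.piecewise_eq_of_mem _ _ _ hi, Matrix.updateRow_ne hik,
          Matrix.one_apply, Pi.single_apply, eq_comm]
    rw [h2]
    exact det_one_updateRow k x
  have hval_zero : ∀ s : Finset n,
      s ∉ insert univ (univ.image fun k => univ.erase k) →
      f.toMultilinearMap (base s) = 0 := by
    intro s hs
    have hs1 : s ≠ univ := fun h => hs (by simp [h])
    have hs2 : ∀ k : n, univ.erase k ≠ s := fun k h =>
      hs (Finset.mem_insert.mpr (Or.inr (Finset.mem_image.mpr ⟨k, Finset.mem_univ k, h⟩)))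
    have hne : sᶜ.Nonempty := by
      rw [Finset.nonempty_iff_ne_empty]
      intro h0
      exact hs1 (by simpa using h0)
    obtain ⟨k, hk⟩ := hne
    have hknot : sᶜ ≠ {k} := by
      intro h0
      refine hs2 k ?_
      rw [← Finset.compl_singleton, ← h0, compl_compl]
    have hex : ¬ ∀ j ∈ sᶜ, j = k := by
      intro hall
      exact hknot (Finset.eq_singleton_iff_unique_mem.mpr ⟨hk, hall⟩)
    push_neg at hex
    obtain ⟨j, hj, hjk⟩ := hex
    have h1 : base s j = base s k := by
      simp [hbase, hb, Finset.piecewise_eq_of_notMem, Finset.mem_compl.mp hj,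
        Finset.mem_compl.mp hk]
    exact f.map_eq_zero_of_eq (base s) h1 hjk
  calc ∑ s : Finset n, f.toMultilinearMap (s.piecewise a b)
      = ∑ s : Finset n, (∏ i ∈ s, (1 - x i)) * f.toMultilinearMap (base s) := by
        exact Finset.sum_congr rfl fun s _ => key s
    _ = ∑ s ∈ insert univ (univ.image fun k => univ.erase k),
          (∏ i ∈ s, (1 - x i)) * f.toMultilinearMap (base s) := by
        refine (Finset.sum_subset (Finset.subset_univ _) fun s _ hs => ?_).symm
        rw [hval_zero s hs, mul_zero]
    _ = ∏ i, (1 - x i) + ∑ k, (∏ i ∈ univ.erase k, (1 - x i)) * x k := by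
        rw [Finset.sum_insert, Finset.sum_image]
        · rw [hval_univ, mul_one]
          congr 1
          exact Finset.sum_congr rfl fun k _ => by rw [hval_erase]
        · intro a _ c _ hac
          by_contra hne
          exact (Finset.notMem_erase a univ) ((show univ.erase a = univ.erase c from hac) ▸ Finset.mem_erase.mpr ⟨hne, Finset.mem_univ a⟩)
        · intro hmem
          obtain ⟨k, -, hk⟩ := Finset.mem_image.mp hmem
          exact (Finset.notMem_erase k univ) (hk.symm ▸ Finset.mem_univ k)

private lemma prod_one_sub (s : Finset n) (x : n → R) :
    ∏ i ∈ s, (1 - x i) = ∑ t ∈ s.powerset, (-1 : R) ^ t.card * ∏ i ∈ t, x i := by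
  have h := Finset.prod_add (fun i => -x i) (fun _ => (1 : R)) s
  have h1 : ∏ i ∈ s, (1 - x i) = ∏ i ∈ s, (-x i + 1) := by
    refine Finset.prod_congr rfl fun i _ => by ring
  rw [h1, h]
  refine Finset.sum_congr rfl fun t _ => ?_
  rw [Finset.prod_const_one, mul_one]
  calc ∏ i ∈ t, -x i = ∏ i ∈ t, (-1 : R) * x i := by
        refine Finset.prod_congr rfl fun i _ => by ring
    _ = (-1 : R) ^ t.card * ∏ i ∈ t, x i := by
        rw [Finset.prod_mul_distrib, Finset.prod_const]

private lemma coeff_eq (d : ℕ) (hd : 2 ≤ d) :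
    (-1 : R) ^ d + (d : R) * (-1 : R) ^ (d - 1)
      = (-1 : R) ^ (d - 1) * ((d - 1 : ℕ) : R) := by
  obtain ⟨m, rfl⟩ : ∃ m, d = m + 2 := ⟨d - 2, by omega⟩
  have h1 : m + 2 - 1 = m + 1 := rfl
  rw [h1]
  push_cast
  ring

private lemma key_identity (x : n → R) :
    ∏ i, (1 - x i) + ∑ k, (∏ i ∈ univ.erase k, (1 - x i)) * x k
      = 1 + ∑ K ∈ univ.powerset.filter (fun K : Finset n => 2 ≤ K.card),
          (-1 : R) ^ (K.card - 1) * ((K.card - 1 : ℕ) : R) * ∏ j ∈ K, x j := by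
  classical
  have h2 : ∀ k : n, (∏ i ∈ univ.erase k, (1 - x i)) * x k
      = ∑ K ∈ univ.powerset,
          if k ∈ K then (-1 : R) ^ (K.card - 1) * ∏ j ∈ K, x j else 0 := by
    intro k
    rw [prod_one_sub, Finset.sum_mul, ← Finset.sum_filter]
    refine Finset.sum_bij (fun u _ => insert k u) ?_ ?_ ?_ ?_
    · intro u hu
      exact Finset.mem_filter.mpr ⟨Finset.mem_powerset.mpr (Finset.subset_univ _),
        Finset.mem_insert_self k u⟩
    · intro u hu u' hu' hins
      have hk : k ∉ u := fun h' =>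
        (Finset.mem_erase.mp ((Finset.mem_powerset.mp hu) h')).1 rfl
      have hk' : k ∉ u' := fun h' =>
        (Finset.mem_erase.mp ((Finset.mem_powerset.mp hu') h')).1 rfl
      have h' : insert k u = insert k u' := hins
      rw [← Finset.erase_insert hk, ← Finset.erase_insert hk', h']
    · intro K hK
      obtain ⟨-, hkK⟩ := Finset.mem_filter.mp hK
      refine ⟨K.erase k, Finset.mem_powerset.mpr ?_, Finset.insert_erase hkK⟩
      exact Finset.erase_subset_erase k (Finset.subset_univ K)
    · intro u hu
      have hk : k ∉ u := fun h' =>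
        (Finset.mem_erase.mp ((Finset.mem_powerset.mp hu) h')).1 rfl
      rw [Finset.card_insert_of_notMem hk, Finset.prod_insert hk]
      simp only [Nat.add_sub_cancel]
      ring
  have h3 : ∑ k, (∏ i ∈ univ.erase k, (1 - x i)) * x k
      = ∑ K ∈ univ.powerset,
          (K.card : R) * ((-1 : R) ^ (K.card - 1) * ∏ j ∈ K, x j) := by
    rw [Finset.sum_congr rfl fun k _ => h2 k, Finset.sum_comm]
    refine Finset.sum_congr rfl fun K _ => ?_
    rw [Finset.sum_ite_mem, Finset.univ_inter, Finset.sum_const, nsmul_eq_mul]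
  rw [prod_one_sub, h3, ← Finset.sum_add_distrib]
  rw [← Finset.sum_filter_add_sum_filter_not univ.powerset
    (fun K : Finset n => 2 ≤ K.card)
    (fun K => (-1 : R) ^ K.card * ∏ i ∈ K, x i
      + (K.card : R) * ((-1 : R) ^ (K.card - 1) * ∏ j ∈ K, x j))]
  have hbig : ∑ K ∈ univ.powerset.filter (fun K : Finset n => 2 ≤ K.card),
      ((-1 : R) ^ K.card * ∏ i ∈ K, x i
        + (K.card : R) * ((-1 : R) ^ (K.card - 1) * ∏ j ∈ K, x j))
      = ∑ K ∈ univ.powerset.filter (fun K : Finset n => 2 ≤ K.card),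
          (-1 : R) ^ (K.card - 1) * ((K.card - 1 : ℕ) : R) * ∏ j ∈ K, x j := by
    refine Finset.sum_congr rfl fun K hK => ?_
    have hc : 2 ≤ K.card := (Finset.mem_filter.mp hK).2
    have := coeff_eq (R := R) K.card hc
    calc (-1 : R) ^ K.card * ∏ i ∈ K, x i
          + (K.card : R) * ((-1 : R) ^ (K.card - 1) * ∏ j ∈ K, x j)
        = ((-1 : R) ^ K.card + (K.card : R) * (-1 : R) ^ (K.card - 1)) * ∏ j ∈ K, x j := by
          ring
      _ = _ := by rw [this]
  have hsmall : ∑ K ∈ univ.powerset.filter (fun K : Finset n => ¬ 2 ≤ K.card),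
      ((-1 : R) ^ K.card * ∏ i ∈ K, x i
        + (K.card : R) * ((-1 : R) ^ (K.card - 1) * ∏ j ∈ K, x j)) = 1 := by
    rw [Finset.sum_eq_single_of_mem (∅ : Finset n)]
    · simp
    · simp
    · intro K hK hKne
      obtain ⟨-, hc⟩ := Finset.mem_filter.mp hK
      have hc1 : K.card = 1 := by
        have h0 : K.card ≠ 0 := fun h => hKne (Finset.card_eq_zero.mp h)
        omega
      rw [hc1]
      push_cast
      ring
  rw [hbig, hsmall, add_comm]

end aux

section blockdiag

variable {R : Type*} [CommRing R]

private lemma det_blockDiag {r : ℕ} (I : Fin r → Type*) [∀ k, Fintype (I k)]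
    [∀ k, DecidableEq (I k)] (A : ∀ k, Matrix (I k) (I k) R) :
    (Matrix.blockDiagonal' A).det = ∏ k, (A k).det := by
  rw [(Matrix.blockTriangular_blockDiagonal' A).det_fintype]
  refine Finset.prod_congr rfl fun k _ => ?_
  let eqv : I k ≃ {a : (Σ k, I k) // a.fst = k} :=
    { toFun := fun i => ⟨⟨k, i⟩, rfl⟩
      invFun := fun p => p.2 ▸ p.1.2
      left_inv := fun i => rfl
      right_inv := fun p => by
        obtain ⟨⟨h', i⟩, hp⟩ := p
        subst hp
        rfl }
  rw [← Matrix.det_submatrix_equiv_self eqv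
    ((Matrix.blockDiagonal' A).toSquareBlock Sigma.fst k)]
  congr 1
  ext i j
  simp [Matrix.toSquareBlock_def, eqv, Matrix.blockDiagonal'_apply_eq]

end blockdiag

theorem stmt_5 {R : Type*} [CommRing R] (r : ℕ) (q : R)
    (I : Fin r → Type*) [∀ k, Fintype (I k)] [∀ k, DecidableEq (I k)]
    (e : ∀ k, I k) (A : ∀ k, Matrix (I k) (I k) R)
    (M : Matrix (Σ k, I k) (Σ k, I k) R)
    (hdiag : ∀ (k : Fin r) (i j : I k), M ⟨k, i⟩ ⟨k, j⟩ = A k i j)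
    (hoff : ∀ (h k : Fin r), h ≠ k → ∀ (i : I h) (j : I k),
      M ⟨h, i⟩ ⟨k, j⟩ = q * A h i (e h) * A k (e k) j) :
    M.det =
      (1 + ∑ K ∈ Finset.univ.powerset.filter (fun K : Finset (Fin r) => 2 ≤ K.card),
          (-1 : R) ^ (K.card - 1) * ((K.card - 1 : ℕ) : R) * ∏ k ∈ K, q * A k (e k) (e k)) *
        ∏ k, (A k).det := by
  classical
  set D : Matrix (Σ k, I k) (Σ k, I k) R := Matrix.blockDiagonal' A with hD
  set P : Matrix (Σ k, I k) (Fin r) R :=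
    Matrix.of fun p m => if p = ⟨m, e m⟩ then 1 else 0 with hP
  set C : Matrix (Fin r) (Fin r) R := Matrix.of fun h k => if h = k then 0 else q with hC
  have hPD : Pᵀ * D = Matrix.of fun (m : Fin r) (p : Σ k, I k) =>
      if m = p.1 then A p.1 (e p.1) p.2 else 0 := by
    ext m p
    rw [Matrix.mul_apply]
    simp only [hP, hD, Matrix.transpose_apply, Matrix.of_apply, ite_mul, one_mul, zero_mul]
    rw [Finset.sum_ite_eq' Finset.univ (⟨m, e m⟩ : Σ k, I k)
      (fun p' => Matrix.blockDiagonal' A p' p)]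
    simp only [Finset.mem_univ, if_true]
    obtain ⟨k, j⟩ := p
    by_cases hm : m = k
    · subst hm
      simp [Matrix.blockDiagonal'_apply_eq]
    · simp [Matrix.blockDiagonal'_apply_ne A _ _ hm, hm]
  have hDP : D * P = Matrix.of fun (p : Σ k, I k) (m : Fin r) =>
      if p.1 = m then A p.1 p.2 (e p.1) else 0 := by
    ext p m
    rw [Matrix.mul_apply]
    simp only [hP, hD, Matrix.of_apply, mul_ite, mul_one, mul_zero]
    rw [Finset.sum_ite_eq' Finset.univ (⟨m, e m⟩ : Σ k, I k)
      (fun p' => Matrix.blockDiagonal' A p p')]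
    simp only [Finset.mem_univ, if_true]
    obtain ⟨h, i⟩ := p
    by_cases hm : h = m
    · subst hm
      simp [Matrix.blockDiagonal'_apply_eq]
    · simp [Matrix.blockDiagonal'_apply_ne A _ _ hm, hm]
  set Y : Matrix (Fin r) (Σ k, I k) R := C * (Pᵀ * D) with hY
  have hCPD : Y = Matrix.of fun (m : Fin r) (p : Σ k, I k) =>
      (if m = p.1 then 0 else q) * A p.1 (e p.1) p.2 := by
    rw [hY, hPD]
    ext m p
    rw [Matrix.mul_apply]
    simp only [hC, Matrix.of_apply, mul_ite, mul_zero]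
    rw [Finset.sum_ite_eq' Finset.univ p.1
      (fun m' => (if m = m' then 0 else q) * A p.1 (e p.1) p.2)]
    simp
  have hZ : Pᵀ * D * P = Matrix.diagonal (fun k => A k (e k) (e k)) := by
    rw [hPD]
    ext m m'
    rw [Matrix.mul_apply]
    simp only [hP, Matrix.of_apply, mul_ite, mul_one, mul_zero]
    rw [Finset.sum_ite_eq' Finset.univ (⟨m', e m'⟩ : Σ k, I k)
      (fun p' => if m = p'.1 then A p'.1 (e p'.1) p'.2 else 0)]
    simp only [Finset.mem_univ, if_true]
    by_cases hm : m = m'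
    · subst hm
      simp [Matrix.diagonal]
    · simp [Matrix.diagonal, hm]
  have hX : (D * P) * Y = Matrix.of fun (p p' : Σ k, I k) =>
      A p.1 p.2 (e p.1) * ((if p.1 = p'.1 then 0 else q) * A p'.1 (e p'.1) p'.2) := by
    rw [hDP, hCPD]
    ext p p'
    rw [Matrix.mul_apply]
    simp only [Matrix.of_apply, ite_mul, zero_mul]
    rw [Finset.sum_ite_eq]
    simp
  have hM : M = D * (1 + P * Y) := by
    have hM' : M = D + (D * P) * Y := by
      ext p p'
      obtain ⟨h, i⟩ := p
      obtain ⟨k, j⟩ := p'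
      rw [Matrix.add_apply, hX, Matrix.of_apply]
      by_cases hhk : h = k
      · subst hhk
        rw [hdiag]
        simp [hD, Matrix.blockDiagonal'_apply_eq]
      · rw [hoff h k hhk i j]
        have : D ⟨h, i⟩ ⟨k, j⟩ = 0 := Matrix.blockDiagonal'_apply_ne A _ _ hhk
        rw [this]
        simp only [hhk, if_false]
        ring
    rw [hM', Matrix.mul_add, Matrix.mul_one, Matrix.mul_assoc]
  have hone : (1 : Matrix (Fin r) (Fin r) R) + Y * P
      = Matrix.of fun h k : Fin r => if h = k then 1 else q * A k (e k) (e k) := by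
    have : Y * P = C * (Pᵀ * D * P) := by rw [hY, Matrix.mul_assoc]
    rw [this, hZ]
    ext h k
    rw [Matrix.add_apply, Matrix.mul_diagonal]
    by_cases hhk : h = k
    · subst hhk
      simp [hC, Matrix.one_apply]
    · simp [hC, hhk, Matrix.one_apply, mul_comm]
  rw [hM, Matrix.det_mul, Matrix.det_one_add_mul_comm, hone, hD,
    det_blockDiag I A, det_colConst, key_identity]
  ring
end

section
/- Let $D$ be an $n \times n$ matrix over a commutative ring with $D_{ii} = 1$ for all $i$, let $u, v$ be elements of the ring, and form the $(n+1)\times(n+1)$ matrix $D'$ with upper-left block $D$, with $D'_{i, n+1} = u \cdot D_{i,n}$ for $i \le n-1$, $D'_{n, n+1} = u$, $D'_{n+1, j} = v \cdot D_{n, j}$ for $j \le n-1$ (interpreting $D_{n,n}=1$ so $D'_{n+1,n} = v$), and $D'_{n+1,n+1} = 1$. Then $\det D' = (1 - uv) \det D$. -/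
theorem stmt_6 {R : Type*} [CommRing R] (n : ℕ) (u v : R)
    (D : Matrix (Fin (n + 1)) (Fin (n + 1)) R)
    (hdiag : ∀ i, D i i = 1)
    (D' : Matrix (Fin (n + 2)) (Fin (n + 2)) R)
    (hblock : ∀ i j : Fin (n + 1), D' i.castSucc j.castSucc = D i j)
    (hcol : ∀ i : Fin (n + 1), D' i.castSucc (Fin.last (n + 1)) = u * D i (Fin.last n))
    (hrow : ∀ j : Fin (n + 1), D' (Fin.last (n + 1)) j.castSucc = v * D (Fin.last n) j)
    (hcorner : D' (Fin.last (n + 1)) (Fin.last (n + 1)) = 1) :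
    D'.det = (1 - u * v) * D.det := by
  set M := D'.updateRow (Fin.last (n+1))
      (D' (Fin.last (n+1)) + (-v) • D' (Fin.last n).castSucc) with hM
  have hne : Fin.last (n+1) ≠ (Fin.last n).castSucc := by
    simp [Fin.ext_iff]
  have hdet : D'.det = M.det := by
    rw [hM, Matrix.det_updateRow_add_smul_self D' hne]
  rw [hdet, Matrix.det_succ_row M (Fin.last (n+1))]
  have hMlast : ∀ j : Fin (n+1), M (Fin.last (n+1)) j.castSucc = 0 := by
    intro j
    simp only [hM, Matrix.updateRow_self, Pi.add_apply, Pi.smul_apply, smul_eq_mul]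
    rw [hrow, hblock]
    ring
  have hMcorner : M (Fin.last (n+1)) (Fin.last (n+1)) = 1 - u * v := by
    simp only [hM, Matrix.updateRow_self, Pi.add_apply, Pi.smul_apply, smul_eq_mul]
    rw [hcorner, hcol, hdiag]
    ring
  rw [Finset.sum_eq_single (Fin.last (n+1))]
  · have hsub : M.submatrix (Fin.last (n+1)).succAbove (Fin.last (n+1)).succAbove = D := by
      ext i j
      simp only [Matrix.submatrix_apply, Fin.succAbove_last, hM]
      rw [Matrix.updateRow_ne (by simp [Fin.ext_iff, Fin.castSucc]; omega), hblock]
    rw [hsub, hMcorner]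
    simp [Fin.val_last, pow_add, mul_comm]
    have h1 : ((-1:R)^n * (-1)^n) = 1 := by
      rw [← pow_add, ← two_mul, pow_mul, neg_one_sq, one_pow]
    rw [h1]
    ring
  · intro j _ hj
    obtain ⟨j', rfl⟩ := Fin.exists_castSucc_eq.mpr hj
    rw [hMlast]
    ring
  · intro h
    exact absurd (Finset.mem_univ _) h
end

section
/- Let $q$ be an element of a commutative ring and $n \geq 1$. The determinant of the $n \times n$ matrix $(q^{|i-j|})_{1 \le i,j \le n}$ equals $(1 - q^2)^{n-1}$. -/
theorem stmt_8 {R : Type*} [CommRing R] (n : ℕ) (hn : 1 ≤ n) (q : R) :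
    Matrix.det (Matrix.of fun i j : Fin n => q ^ ((i : ℤ) - (j : ℤ)).natAbs) =
      (1 - q ^ 2) ^ (n - 1) := by
  set A : Matrix (Fin n) (Fin n) R :=
    Matrix.of fun i j : Fin n => q ^ ((i : ℤ) - (j : ℤ)).natAbs with hA
  set T : Matrix (Fin n) (Fin n) R :=
    Matrix.of (fun k j : Fin n => if k = j then 1 else if (k : ℕ) = (j : ℕ) + 1 then -q else 0)
    with hT
  have hTdet : T.det = 1 := by
    rw [Matrix.det_of_lowerTriangular]
    · simp [hT]
    · intro i j hij
      have h : (i : ℕ) < (j : ℕ) := hij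
      simp only [hT, Matrix.of_apply]
      split_ifs with h1 h2
      · exact absurd (congrArg Fin.val h1) (by omega)
      · omega
      · rfl
  have hBentry : ∀ i j : Fin n, (A * T) i j =
      A i j + (if h : (j : ℕ) + 1 < n then -q * A i ⟨(j : ℕ) + 1, h⟩ else 0) := by
    intro i j
    rw [Matrix.mul_apply]
    have key : ∀ k : Fin n, A i k * T k j =
        (if k = j then A i j else 0) +
        (if h : (j : ℕ) + 1 < n then (if k = (⟨(j : ℕ) + 1, h⟩ : Fin n) then -q * A i k else 0)
          else 0) := by
      intro k
      simp only [hT, Matrix.of_apply]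
      by_cases h1 : k = j
      · subst h1
        rw [if_pos rfl, if_pos rfl]
        by_cases h2 : (k : ℕ) + 1 < n
        · rw [dif_pos h2, if_neg (by intro h; exact absurd (congrArg Fin.val h) (by simp))]
          ring
        · rw [dif_neg h2]; ring
      · rw [if_neg h1, if_neg h1]
        by_cases h2 : (k : ℕ) = (j : ℕ) + 1
        · have hlt : (j : ℕ) + 1 < n := h2 ▸ k.isLt
          rw [if_pos h2, dif_pos hlt, if_pos (Fin.ext h2 : k = ⟨(j : ℕ) + 1, hlt⟩)]
          ring
        · rw [if_neg h2]
          by_cases h3 : (j : ℕ) + 1 < n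
          · rw [dif_pos h3, if_neg (fun h => h2 (congrArg Fin.val h))]; ring
          · rw [dif_neg h3]; ring
    rw [Finset.sum_congr rfl (fun k _ => key k), Finset.sum_add_distrib,
      Finset.sum_ite_eq' Finset.univ j, if_pos (Finset.mem_univ j)]
    congr 1
    split
    · rw [Finset.sum_ite_eq' Finset.univ, if_pos (Finset.mem_univ _)]
    · simp
  have hBtri : (A * T).BlockTriangular id := by
    intro i j hij
    have hij' : (j : ℕ) < (i : ℕ) := hij
    have hlt : (j : ℕ) + 1 < n := by omega
    rw [hBentry, dif_pos hlt]
    simp only [hA, Matrix.of_apply]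
    have h1 : ((i : ℤ) - (j : ℤ)).natAbs = (i : ℕ) - (j : ℕ) := by omega
    have h2 : ((i : ℤ) - (((j : ℕ) + 1 : ℕ) : ℤ)).natAbs = (i : ℕ) - ((j : ℕ) + 1) := by
      push_cast; omega
    rw [h1, h2]
    have h3 : (i : ℕ) - (j : ℕ) = ((i : ℕ) - ((j : ℕ) + 1)) + 1 := by omega
    rw [h3, pow_succ]
    ring
  have hBdiag : ∀ i : Fin n, (A * T) i i = if (i : ℕ) + 1 < n then 1 - q ^ 2 else 1 := by
    intro i
    rw [hBentry]
    simp only [hA, Matrix.of_apply]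
    have e1 : ((i : ℤ) - (i : ℤ)).natAbs = 0 := by omega
    split
    · rename_i h
      have e2 : ((i : ℤ) - (((i : ℕ) + 1 : ℕ) : ℤ)).natAbs = 1 := by push_cast; omega
      rw [e1, e2, pow_zero, pow_one]
      ring
    · rename_i h
      rw [e1, pow_zero, add_zero]
  have hdet : A.det * T.det = (A * T).det := (Matrix.det_mul A T).symm
  rw [hTdet, mul_one] at hdet
  have hfe : Finset.univ.filter (fun i : Fin n => (i : ℕ) + 1 < n)
      = Finset.Iio (⟨n - 1, by omega⟩ : Fin n) := by
    ext i
    simp [Fin.lt_def]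
    omega
  rw [hdet, Matrix.det_of_upperTriangular hBtri,
    Finset.prod_congr rfl (fun i _ => hBdiag i),
    ← Finset.prod_filter_mul_prod_filter_not Finset.univ (fun i : Fin n => (i : ℕ) + 1 < n)]
  have hL : (∏ i ∈ Finset.univ.filter (fun i : Fin n => (i : ℕ) + 1 < n),
      (if (i : ℕ) + 1 < n then 1 - q ^ 2 else 1)) = (1 - q ^ 2) ^ (n - 1) := by
    rw [Finset.prod_congr rfl (fun i hi => if_pos (Finset.mem_filter.mp hi).2),
      Finset.prod_const, hfe, Fin.card_Iio]
  have hR : (∏ i ∈ Finset.univ.filter (fun i : Fin n => ¬((i : ℕ) + 1 < n)),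
      (if (i : ℕ) + 1 < n then 1 - q ^ 2 else 1)) = 1 := by
    apply Finset.prod_eq_one
    intro i hi
    rw [if_neg (Finset.mem_filter.mp hi).2]
  rw [hL, hR, mul_one]
end

section
/- Let $R$ be a commutative ring, $r \ge 1$, and $a_1, \dots, a_r \in R$. The determinant of the $r \times r$ matrix $F$ with $F_{kk} = 1$ and $F_{hk} = a_k$ for $h \neq k$ (i.e., column $k$ has the constant value $a_k$ off the diagonal) equals $1 + \sum_{K \subseteq [r], \#K \geq 2} (-1)^{\#K-1}(\#K-1) \prod_{k \in K} a_k$. -/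
open Finset

section aux
variable {R : Type*} [CommRing R] {ι : Type*} [DecidableEq ι]

lemma auxL1 (a : ι → R) (s : Finset ι) :
    ∏ i ∈ s, (1 - a i) = ∑ K ∈ s.powerset, (-1 : R) ^ K.card * ∏ k ∈ K, a k := by
  calc ∏ i ∈ s, (1 - a i) = ∏ i ∈ s, (-a i + 1) := by
        refine Finset.prod_congr rfl fun i _ => by ring
    _ = ∑ t ∈ s.powerset, (∏ i ∈ t, -a i) * ∏ i ∈ s \ t, (1 : R) := Finset.prod_add _ _ s
    _ = _ := by
        refine Finset.sum_congr rfl fun t _ => ?_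
        rw [Finset.prod_const_one, mul_one]
        rw [show (fun i => -a i) = fun i => (-1 : R) * a i from funext fun i => by ring]
        rw [Finset.prod_mul_distrib, Finset.prod_const]

lemma auxL2 (a : ι → R) (s : Finset ι) :
    ∑ k ∈ s, a k * ∏ j ∈ s.erase k, (1 - a j)
      = -∑ K ∈ s.powerset, (K.card : R) * (-1 : R) ^ K.card * ∏ k ∈ K, a k := by
  induction s using Finset.induction_on with
  | empty => simp
  | @insert i s hi ih =>
    rw [Finset.sum_insert hi, Finset.erase_insert hi,
      Finset.sum_powerset_insert hi]
    have hstep : ∀ k ∈ s, a k * ∏ j ∈ (insert i s).erase k, (1 - a j)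
        = (1 - a i) * (a k * ∏ j ∈ s.erase k, (1 - a j)) := by
      intro k hk
      have hki : i ≠ k := fun h => hi (h ▸ hk)
      rw [Finset.erase_insert_of_ne hki , Finset.prod_insert
        (fun h => hi (Finset.mem_of_mem_erase h))]
      ring
    rw [Finset.sum_congr rfl hstep, ← Finset.mul_sum, ih]
    have hcard : ∀ K ∈ s.powerset, ((insert i K).card : R) * (-1 : R) ^ (insert i K).card
        * ∏ k ∈ insert i K, a k
        = -(((K.card : R) + 1) * (-1 : R) ^ K.card * (a i * ∏ k ∈ K, a k)) := by
      intro K hK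
      have hiK : i ∉ K := fun h => hi (Finset.mem_powerset.mp hK h)
      rw [Finset.card_insert_of_notMem hiK, Finset.prod_insert hiK]
      push_cast
      ring
    rw [Finset.sum_congr rfl hcard, Finset.sum_neg_distrib]
    have hsplit : ∑ K ∈ s.powerset, ((K.card : R) + 1) * (-1 : R) ^ K.card * (a i * ∏ k ∈ K, a k)
        = a i * ((∑ K ∈ s.powerset, (K.card : R) * (-1 : R) ^ K.card * ∏ k ∈ K, a k)
          + ∑ K ∈ s.powerset, (-1 : R) ^ K.card * ∏ k ∈ K, a k) := by
      rw [mul_add, Finset.mul_sum, Finset.mul_sum, ← Finset.sum_add_distrib]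
      exact Finset.sum_congr rfl fun K _ => by ring
    rw [hsplit, ← auxL1]
    ring

end aux

theorem stmt_10 {R : Type*} [CommRing R] (r : ℕ) (hr : 1 ≤ r) (a : Fin r → R) :
    Matrix.det (Matrix.of fun h k : Fin r => if h = k then 1 else a k) =
      1 + ∑ K ∈ Finset.univ.powerset.filter (fun K : Finset (Fin r) => 2 ≤ K.card),
        (-1 : R) ^ (K.card - 1) * ((K.card - 1 : ℕ) : R) * ∏ k ∈ K, a k := by
  classical
  -- Step 1: the determinant equals ∏ (1 - a i) + ∑ k, a k * ∏_{j ≠ k} (1 - a j)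
  have hdet : Matrix.det (Matrix.of fun h k : Fin r => if h = k then 1 else a k)
      = ∏ i, (1 - a i) + ∑ k, a k * ∏ j ∈ Finset.univ.erase k, (1 - a j) := by
    rw [← Matrix.det_transpose]
    set u : Fin r → Fin r → R := fun h => (1 - a h) • (Pi.single h 1 : Fin r → R) with hu
    set v : Fin r → Fin r → R := fun h _ => a h with hv
    have htr : (Matrix.of fun h k : Fin r => if h = k then (1 : R) else a k).transpose
        = Matrix.of fun h k : Fin r => u h k + v h k := by
      ext h k
      by_cases hkh : k = h
      · subst hkh
        simp [hu, hv, Matrix.transpose_apply, Pi.single_apply]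
      · simp [hu, hv, Matrix.transpose_apply, Pi.single_apply, hkh]
    rw [htr]
    set f := (Matrix.detRowAlternating (R := R) (n := Fin r)).toMultilinearMap with hf
    have hcoe : ∀ m : Fin r → Fin r → R, f m = Matrix.det (Matrix.of m) := fun _ => rfl
    have hdet1 : Matrix.det (Matrix.of fun h k : Fin r => u h k + v h k)
        = ∑ s : Finset (Fin r), f (s.piecewise u v) := by
      rw [← MultilinearMap.map_add_univ]
      rfl
    rw [hdet1]
    set E : Fin r → Fin r → R := fun h => (Pi.single h 1 : Fin r → R) with hE
    set O : Fin r → Fin r → R := fun _ _ => (1 : R) with hO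
    set c : Fin r → R := fun h => 1 - a h with hc
    have hpiece : ∀ s : Finset (Fin r),
        s.piecewise u v = fun i => (s.piecewise c a i) • (s.piecewise E O i) := by
      intro s
      funext i
      by_cases his : i ∈ s
      · simp only [Finset.piecewise_eq_of_mem _ _ _ his, hu, hc, hE]
      · simp only [Finset.piecewise_eq_of_notMem _ _ _ his, hv, hO]
        funext j
        simp
    have hval : ∀ s : Finset (Fin r),
        f (s.piecewise E O)
          = (if s = Finset.univ then (1 : R) else 0)
            + ∑ k, (if s = Finset.univ.erase k then (1 : R) else 0) := by
      intro s
      rw [hcoe]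
      by_cases hsu : s = Finset.univ
      · subst hsu
        have hE1 : Matrix.of (Finset.univ.piecewise E O) = (1 : Matrix (Fin r) (Fin r) R) := by
          ext h k
          rw [Finset.piecewise_univ]
          simp only [hE, Matrix.of_apply, Matrix.one_apply, Pi.single_apply]
          exact if_congr eq_comm rfl rfl
        rw [hE1, Matrix.det_one]
        have : ∀ k : Fin r, ((Finset.univ : Finset (Fin r)) = Finset.univ.erase k) = False := by
          intro k
          simp only [eq_iff_iff, iff_false]
          intro hcon
          exact Finset.erase_eq_self.mp hcon.symm (Finset.mem_univ k)
        simp [this]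
      · by_cases hs1 : ∃ k, s = Finset.univ.erase k
        · obtain ⟨k, rfl⟩ := hs1
          have hrow : Matrix.of ((Finset.univ.erase k).piecewise E O)
              = Matrix.updateRow (1 : Matrix (Fin r) (Fin r) R) k
                (∑ i, (fun _ => (1 : R)) i • (1 : Matrix (Fin r) (Fin r) R) i) := by
            funext i
            show (Finset.univ.erase k).piecewise E O i = _
            by_cases hik : i = k
            · subst hik
              rw [Finset.piecewise_eq_of_notMem _ _ _ (Finset.notMem_erase i _)]
              rw [Matrix.updateRow_self]
              funext j
              simp [hO, Matrix.one_apply, Finset.sum_ite_eq]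
              rw [show (∑ x : Fin r, (1 : Matrix (Fin r) (Fin r) R) x) j
                = ∑ x : Fin r, (1 : Matrix (Fin r) (Fin r) R) x j from Finset.sum_apply _ _ _]
              simp [Matrix.one_apply]
            · rw [Finset.piecewise_eq_of_mem _ _ _
                (Finset.mem_erase.mpr ⟨hik, Finset.mem_univ i⟩)]
              rw [Matrix.updateRow_ne hik]
              funext j
              simp only [hE, Matrix.one_apply, Pi.single_apply]
              exact if_congr eq_comm rfl rfl
          rw [hrow, Matrix.det_updateRow_sum]
          rw [if_neg hsu]
          have hsum : ∑ k' : Fin r, (if Finset.univ.erase k = Finset.univ.erase k'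
              then (1 : R) else 0) = 1 := by
            have : ∀ k' : Fin r, (if Finset.univ.erase k = Finset.univ.erase k'
                then (1 : R) else 0) = (if k' = k then (1 : R) else 0) := by
              intro k'
              congr 1
              simp only [eq_iff_iff]
              constructor
              · intro h
                exact ((Finset.erase_inj Finset.univ (Finset.mem_univ k)).mp h).symm
              · intro h; rw [h]
            rw [Finset.sum_congr rfl fun k' _ => this k', Finset.sum_ite_eq' _ k]
            simp
          rw [hsum]
          simp [Matrix.det_one]
        · push_neg at hs1
          have hcard : 1 < sᶜ.card := by
            rcases Nat.lt_or_ge 1 sᶜ.card with h | h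
            · exact h
            · exfalso
              rcases (by omega : sᶜ.card = 0 ∨ sᶜ.card = 1) with h0 | h1
              · rw [Finset.card_eq_zero] at h0
                exact hsu (by simpa using congrArg compl h0)
              · obtain ⟨x, hx⟩ := Finset.card_eq_one.mp h1
                apply hs1 x
                have := congrArg compl hx
                rw [compl_compl, Finset.compl_singleton] at this
                exact this
          obtain ⟨x, hx, y, hy, hxy⟩ := Finset.one_lt_card.mp hcard
          rw [Finset.mem_compl] at hx hy
          have hxv : s.piecewise E O x = s.piecewise E O y := by
            rw [Finset.piecewise_eq_of_notMem _ _ _ hx,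
              Finset.piecewise_eq_of_notMem _ _ _ hy]
          have hz : Matrix.det (Matrix.of (s.piecewise E O)) = 0 :=
            AlternatingMap.map_eq_zero_of_eq _ _ hxv hxy
          rw [hz, if_neg hsu]
          have : ∀ k : Fin r, (if s = Finset.univ.erase k then (1 : R) else 0) = 0 := by
            intro k
            rw [if_neg (hs1 k)]
          simp [this]
    have hterm : ∀ s : Finset (Fin r),
        f (s.piecewise u v)
          = (∏ i, s.piecewise c a i) * ((if s = Finset.univ then (1 : R) else 0)
            + ∑ k, (if s = Finset.univ.erase k then (1 : R) else 0)) := by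
      intro s
      rw [hpiece s, f.map_smul_univ (s.piecewise c a) (s.piecewise E O), smul_eq_mul]
      congr 1
      exact hval s
    rw [Finset.sum_congr rfl fun s _ => hterm s]
    have hexp : ∑ s : Finset (Fin r), (∏ i, s.piecewise c a i)
          * ((if s = Finset.univ then (1 : R) else 0)
            + ∑ k, (if s = Finset.univ.erase k then (1 : R) else 0))
        = (∑ s : Finset (Fin r), if s = Finset.univ then (∏ i, s.piecewise c a i) else 0)
          + ∑ s : Finset (Fin r), ∑ k, (if s = Finset.univ.erase k
              then (∏ i, s.piecewise c a i) else 0) := by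
      rw [← Finset.sum_add_distrib]
      refine Finset.sum_congr rfl fun s _ => ?_
      rw [mul_add, Finset.mul_sum]
      congr 1
      · rw [mul_ite, mul_one, mul_zero]
      · exact Finset.sum_congr rfl fun k _ => by rw [mul_ite, mul_one, mul_zero]
    rw [hexp]
    congr 1
    · rw [Finset.sum_ite_eq' _ Finset.univ]
      simp [Finset.piecewise_univ, hc]
    · rw [Finset.sum_comm]
      refine Finset.sum_congr rfl fun k _ => ?_
      rw [Finset.sum_ite_eq' _ (Finset.univ.erase k)]
      rw [if_pos (Finset.mem_univ _)]
      rw [Finset.prod_piecewise]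
      rw [Finset.univ_inter, Finset.sdiff_erase_self (Finset.mem_univ k),
        Finset.prod_singleton]
      simp only [hc]
      ring
  rw [hdet, auxL1, auxL2]
  -- Step 2: combine
  have hcomb : ∑ K ∈ (Finset.univ : Finset (Fin r)).powerset, (-1 : R) ^ K.card * ∏ k ∈ K, a k
      - ∑ K ∈ (Finset.univ : Finset (Fin r)).powerset,
          (K.card : R) * (-1 : R) ^ K.card * ∏ k ∈ K, a k
      = ∑ K ∈ (Finset.univ : Finset (Fin r)).powerset,
          (1 - (K.card : R)) * (-1 : R) ^ K.card * ∏ k ∈ K, a k := by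
    rw [← Finset.sum_sub_distrib]
    exact Finset.sum_congr rfl fun K _ => by ring
  rw [sub_eq_add_neg] at hcomb
  rw [hcomb]
  rw [← Finset.sum_filter_add_sum_filter_not (Finset.univ : Finset (Fin r)).powerset
      (fun K => 2 ≤ K.card)]
  rw [add_comm]
  congr 1
  · -- sum over K with card ≤ 1 equals 1
    have h1 : ∀ K ∈ (Finset.univ : Finset (Fin r)).powerset.filter (fun K => ¬ 2 ≤ K.card),
        (1 - (K.card : R)) * (-1 : R) ^ K.card * ∏ k ∈ K, a k
          = if K = ∅ then 1 else 0 := by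
      intro K hK
      simp only [Finset.mem_filter, not_le] at hK
      rcases (by omega : K.card = 0 ∨ K.card = 1) with h | h
      · rw [Finset.card_eq_zero] at h
        simp [h]
      · rw [if_neg (fun he => by simp [he] at h)]
        simp [h]
    rw [Finset.sum_congr rfl h1, Finset.sum_ite_eq' _ (∅ : Finset (Fin r))]
    rw [if_pos (by simp)]
  · -- termwise on card ≥ 2
    refine Finset.sum_congr rfl fun K hK => ?_
    simp only [Finset.mem_filter] at hK
    obtain ⟨m, hm⟩ : ∃ m, K.card = m + 1 := ⟨K.card - 1, by omega⟩
    rw [hm]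
    simp only [Nat.add_sub_cancel, pow_succ]
    push_cast
    ring
end

section
/- Let $\mathsf{A}_1, \dots, \mathsf{A}_r$ be square matrices over a commutative ring, $\mathsf{A}_k$ indexed by $I_k$ with distinguished element $i_1^k$, and suppose additionally that $a_{i_1^k, i_1^k} = 1$ for every $k$. Let $q$ be a ring element and let $M$ be the coupled matrix defined by $m_{i,j} = a_{i,j}$ within a block and $m_{i,j} = q\, a_{i,i_1^h}\, a_{i_1^k, j}$ across blocks $h \neq k$. Then $\det M = (1 + (r-1)q)(1-q)^{r-1} \prod_{k=1}^r \det \mathsf{A}_k$. -/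
open Matrix Finset

section aux11
variable {R : Type*} [CommRing R]

private lemma detJ (m : ℕ) (q : R) :
    (Matrix.of fun i j : Fin (m+1) => if i = j then (1:R) else q).det
      = (1 + (m : R) * q) * (1 - q) ^ m := by
  set J : Matrix (Fin (m+1)) (Fin (m+1)) R :=
    Matrix.of (fun i j => if i = j then (1:R) else q) with hJ
  set L : Matrix (Fin (m+1)) (Fin (m+1)) R :=
    Matrix.of (fun i j => if i = j then (1:R) else if j = 0 then -1 else 0) with hL
  set Rm : Matrix (Fin (m+1)) (Fin (m+1)) R :=
    Matrix.of (fun i j => if i = j then (1:R) else if j = 0 then 1 else 0) with hR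
  set P : Matrix (Fin (m+1)) (Fin (m+1)) R :=
    Matrix.of (fun i j => if i = 0 then (if j = 0 then 1 + (m:R)*q else q)
      else if i = j then 1 - q else 0) with hP
  have hJR : ∀ i j, (J * Rm) i j = if j = 0 then 1 + (m:R) * q else J i j := by
    intro i j
    rw [mul_apply]
    by_cases hj : j = 0
    · subst hj
      rw [if_pos rfl]
      have key : ∀ t : Fin (m+1), J i t * Rm t 0 = q + if i = t then 1 - q else 0 := by
        intro t
        simp only [hJ, hR, of_apply]
        split_ifs <;> first | ring1 | (subst_vars; simp_all) | simp_all
      rw [Finset.sum_congr rfl fun t _ => key t, Finset.sum_add_distrib,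
        Finset.sum_const, Finset.sum_ite_eq univ i fun _ => (1:R) - q]
      simp [Fintype.card_fin]
      ring
    · rw [if_neg hj]
      have key : ∀ t : Fin (m+1), J i t * Rm t j = if t = j then J i t else 0 := by
        intro t
        simp only [hJ, hR, of_apply]
        split_ifs <;> first | ring1 | (subst_vars; simp_all) | simp_all
      rw [Finset.sum_congr rfl fun t _ => key t, Finset.sum_ite_eq' univ j]
      simp
  have hLX : ∀ (X : Matrix (Fin (m+1)) (Fin (m+1)) R) i j,
      (L * X) i j = X i j - if i = 0 then 0 else X 0 j := by
    intro X i j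
    rw [mul_apply]
    have key : ∀ t : Fin (m+1), L i t * X t j =
        (if i = t then X t j else 0) + (if i = 0 then 0 else if t = 0 then -X t j else 0) := by
      intro t
      simp only [hL, of_apply]
      split_ifs <;> first | ring1 | (subst_vars; simp_all) | simp_all
    rw [Finset.sum_congr rfl fun t _ => key t, Finset.sum_add_distrib,
      Finset.sum_ite_eq univ i fun t => X t j]
    by_cases hi : i = 0
    · simp [hi]
    · simp only [if_neg hi, mem_univ, if_true]
      rw [Finset.sum_ite_eq' univ (0 : Fin (m+1)) fun t => -X t j]
      simp
      ring
  have hprod : L * (J * Rm) = P := by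
    ext i j
    rw [hLX, hJR, hJR]
    simp only [hP, hJ, of_apply]
    split_ifs <;> first | ring1 | (subst_vars; simp_all) | simp_all
  have hdetL : L.det = 1 := by
    rw [Matrix.det_of_lowerTriangular L]
    · simp [hL]
    · intro i j hij
      have h1 : i < j := hij
      have h2 : ¬ (i = j) := ne_of_lt h1
      have h3 : ¬ (j = 0) := by
        intro h; rw [h] at h1; exact absurd h1 (Fin.not_lt_zero i)
      simp [hL, h2, h3]
  have hdetR : Rm.det = 1 := by
    rw [Matrix.det_of_lowerTriangular Rm]
    · simp [hR]
    · intro i j hij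
      have h1 : i < j := hij
      have h2 : ¬ (i = j) := ne_of_lt h1
      have h3 : ¬ (j = 0) := by
        intro h; rw [h] at h1; exact absurd h1 (Fin.not_lt_zero i)
      simp [hR, h2, h3]
  have hdetP : P.det = (1 + (m:R) * q) * (1 - q) ^ m := by
    rw [Matrix.det_of_upperTriangular]
    · rw [Fin.prod_univ_succ]
      simp [hP, Fin.succ_ne_zero]
    · intro i j hij
      have h1 : j < i := hij
      have h2 : ¬ (i = j) := (ne_of_lt h1).symm
      have h3 : ¬ (i = 0) := by
        intro h; rw [h] at h1; exact absurd h1 (Fin.not_lt_zero j)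
      simp [hP, h2, h3]
  have : L.det * (J.det * Rm.det) = P.det := by
    rw [← det_mul, ← det_mul, hprod]
  rw [hdetL, hdetR, hdetP] at this
  simpa using this


private lemma detBD {r : ℕ} {I : Fin r → Type*} [∀ k, Fintype (I k)] [∀ k, DecidableEq (I k)]
    (A : ∀ k, Matrix (I k) (I k) R) :
    (Matrix.blockDiagonal' A).det = ∏ k, (A k).det := by
  have htri : (Matrix.blockDiagonal' A).BlockTriangular Sigma.fst := by
    rintro ⟨k, i⟩ ⟨k', j⟩ hlt
    exact Matrix.blockDiagonal'_apply_ne A i j (ne_of_gt hlt)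
  rw [htri.det_fintype]
  refine Finset.prod_congr rfl fun k _ => ?_
  let ek : I k ≃ {a : Σ k, I k // a.1 = k} :=
    { toFun := fun i => ⟨⟨k, i⟩, rfl⟩
      invFun := fun a => cast (congrArg I a.2) a.1.2
      left_inv := fun i => rfl
      right_inv := by rintro ⟨⟨k', i⟩, h⟩; dsimp at h; subst h; rfl }
  have : (Matrix.blockDiagonal' A).toSquareBlock Sigma.fst k
      = (A k).submatrix ek.symm ek.symm := by
    ext a b
    obtain ⟨⟨k1, i⟩, h1⟩ := a
    obtain ⟨⟨k2, j⟩, h2⟩ := b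
    dsimp at h1 h2
    subst h1; subst h2
    simp [Matrix.toSquareBlock_def, ek]
  rw [this, Matrix.det_submatrix_equiv_self]

end aux11

theorem stmt_11 {R : Type*} [CommRing R] (r : ℕ) (q : R)
    (I : Fin r → Type*) [∀ k, Fintype (I k)] [∀ k, DecidableEq (I k)]
    (e : ∀ k, I k) (A : ∀ k, Matrix (I k) (I k) R)
    (hone : ∀ k, A k (e k) (e k) = 1)
    (M : Matrix (Σ k, I k) (Σ k, I k) R)
    (hdiag : ∀ (k : Fin r) (i j : I k), M ⟨k, i⟩ ⟨k, j⟩ = A k i j)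
    (hoff : ∀ (h k : Fin r), h ≠ k → ∀ (i : I h) (j : I k),
      M ⟨h, i⟩ ⟨k, j⟩ = q * A h i (e h) * A k (e k) j) :
    M.det = (1 + ((r - 1 : ℕ) : R) * q) * (1 - q) ^ (r - 1) * ∏ k, (A k).det := by
  classical
  set U : Matrix (Σ k, I k) (Fin r) R :=
    Matrix.of (fun p k => if p.1 = k ∧ p.2 = e p.1 then q else 0) with hU
  set V : Matrix (Fin r) (Σ k, I k) R :=
    Matrix.of (fun k p => if k = p.1 then 0 else A p.1 (e p.1) p.2) with hV
  have hUV : ∀ (p p' : Σ k, I k), (U * V) p p'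
      = (if p.2 = e p.1 then q else 0) * (if p.1 = p'.1 then 0 else A p'.1 (e p'.1) p'.2) := by
    intro p p'
    rw [mul_apply, Finset.sum_eq_single p.1]
    · simp [hU, hV]
    · intro t _ ht
      rw [hU]
      simp only [of_apply]
      rw [if_neg (by rintro ⟨h1, -⟩; exact ht h1.symm), zero_mul]
    · intro h; exact absurd (mem_univ _) h
  have hM : M = Matrix.blockDiagonal' A * (1 + U * V) := by
    ext ⟨h, i⟩ ⟨k, j⟩
    rw [mul_apply, ← Finset.univ_sigma_univ, Finset.sum_sigma]
    rw [Finset.sum_eq_single h]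
    · by_cases hhk : h = k
      · subst hhk
        have : ∀ l : I h, Matrix.blockDiagonal' A ⟨h, i⟩ ⟨h, l⟩
            * ((1 : Matrix (Σ k, I k) (Σ k, I k) R) + U * V) ⟨h, l⟩ ⟨h, j⟩
            = if l = j then A h i l else 0 := by
          intro l
          rw [Matrix.add_apply, hUV, Matrix.blockDiagonal'_apply_eq]
          simp only [if_pos rfl, mul_zero, add_zero, Matrix.one_apply, Sigma.mk.inj_iff,
            heq_eq_eq, true_and]
          by_cases hlj : l = j <;> simp [hlj]
        rw [Finset.sum_congr rfl fun l _ => this l, Finset.sum_ite_eq' univ j, hdiag]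
        simp
      · have : ∀ l : I h, Matrix.blockDiagonal' A ⟨h, i⟩ ⟨h, l⟩
            * ((1 : Matrix (Σ k, I k) (Σ k, I k) R) + U * V) ⟨h, l⟩ ⟨k, j⟩
            = if l = e h then A h i l * (q * A k (e k) j) else 0 := by
          intro l
          rw [Matrix.add_apply, hUV, Matrix.blockDiagonal'_apply_eq]
          have h1 : ((1 : Matrix (Σ k, I k) (Σ k, I k) R) : Matrix _ _ R) ⟨h, l⟩ ⟨k, j⟩ = 0 := by
            rw [Matrix.one_apply_ne]
            simp [Sigma.mk.inj_iff, hhk]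
          rw [h1, zero_add, if_neg hhk]
          by_cases hle : l = e h <;> simp [hle] <;> ring
        rw [Finset.sum_congr rfl fun l _ => this l, Finset.sum_ite_eq' univ (e h), hoff h k hhk]
        simp [hone]
        ring
    · intro m _ hm
      refine Finset.sum_eq_zero fun l _ => ?_
      rw [Matrix.blockDiagonal'_apply_ne A i l (fun hc => hm hc.symm), zero_mul]
    · intro h'; exact absurd (mem_univ _) h'
  have hVU : (1 : Matrix (Fin r) (Fin r) R) + V * U
      = Matrix.of (fun h k => if h = k then (1:R) else q) := by
    ext h k
    have hvu : (V * U) h k = if h = k then 0 else q := by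
      rw [mul_apply, ← Finset.univ_sigma_univ, Finset.sum_sigma]
      rw [Finset.sum_eq_single k]
      · have : ∀ l : I k, V h ⟨k, l⟩ * U ⟨k, l⟩ k
            = if l = e k then (if h = k then 0 else A k (e k) l) * q else 0 := by
          intro l
          simp only [hU, hV, of_apply]
          by_cases hle : l = e k <;> simp [hle]
        rw [Finset.sum_congr rfl fun l _ => this l, Finset.sum_ite_eq' univ (e k)]
        by_cases hhk : h = k <;> simp [hhk, hone k]
      · intro m _ hm
        refine Finset.sum_eq_zero fun l _ => ?_
        simp only [hU, of_apply]
        rw [if_neg (by rintro ⟨h1, -⟩; exact hm h1), mul_zero]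
      · intro h'; exact absurd (mem_univ _) h'
    rw [Matrix.add_apply, hvu, Matrix.one_apply]
    by_cases hhk : h = k <;> simp [hhk]
  have h1 : M.det = (∏ k, (A k).det)
      * (Matrix.of (fun h k : Fin r => if h = k then (1:R) else q)).det := by
    rw [hM, det_mul, detBD, Matrix.det_one_add_mul_comm, hVU]
  cases r with
  | zero =>
    rw [h1]
    simp
  | succ m =>
    rw [h1, detJ m q]
    simp only [Nat.succ_sub_one]
    ring
end
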